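/- Let μ be a probability measure on ℝ with finite variance σ², let X ~ μ with mean E[X], and let X_(1),…,X_(k) be the order statistics of k i.i.d. samples from μ. Then Var_k(μ) = k·σ² − ∑_{i=1}^k (E[X_(i)] − E[X])², and in particular Var_k(μ) ≤ k·σ². -/

import Mathlib

open MeasureTheory ProbabilityTheory Real Filter

noncomputable section

namespace KVariance

/-- Matching cost between two `k`-tuples of points in `ℝ^d`: the minimum over permutations
`σ` of `(1/k) ∑ i, ‖x i - y (σ i)‖²`; this equals the squared 2-Wasserstein distance between
the two empirical measures. -/
def matchCost {d k : ℕ} (x y : Fin k → EuclideanSpace ℝ (Fin d)) : ℝ :=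
  (1 / (k : ℝ)) * ⨅ σ : Equiv.Perm (Fin k), ∑ i, ‖x i - y (σ i)‖ ^ 2

/-- The ambient scaling rate `ρ(k,d)`, with `ρ(1,d) = 1`. -/
def rho (k d : ℕ) : ℝ :=
  if k = 1 then 1
  else if d = 1 then (k : ℝ)
  else if d = 2 then (k : ℝ) / Real.log k
  else (k : ℝ) ^ ((2 : ℝ) / d)

/-- The `k`-variance of a measure `μ` on `ℝ^d`:
`(ρ(k,d)/2) · E[M(X,Y)]` where `X, Y` are independent `k`-tuples of i.i.d. samples from `μ`. -/
def kVar (k d : ℕ) (μ : Measure (EuclideanSpace ℝ (Fin d))) : ℝ :=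
  rho k d / 2 *
    ∫ p, matchCost p.1 p.2
      ∂((Measure.pi fun _ : Fin k => μ).prod (Measure.pi fun _ : Fin k => μ))

/-- Matching cost between two `k`-tuples of reals. -/
def matchCost1 {k : ℕ} (x y : Fin k → ℝ) : ℝ :=
  (1 / (k : ℝ)) * ⨅ σ : Equiv.Perm (Fin k), ∑ i, (x i - y (σ i)) ^ 2

/-- The `k`-variance of a measure on `ℝ` (where `ρ(k,1) = k`). -/
def kVar1 (k : ℕ) (μ : Measure ℝ) : ℝ :=
  (k : ℝ) / 2 *
    ∫ p, matchCost1 p.1 p.2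
      ∂((Measure.pi fun _ : Fin k => μ).prod (Measure.pi fun _ : Fin k => μ))

/-- The order statistics of a `k`-tuple of reals: `orderStat x i` is the `i`-th smallest
entry of `x` (with `i : Fin k`, zero-based). -/
def orderStat {k : ℕ} (x : Fin k → ℝ) : Fin k → ℝ := x ∘ Tuple.sort x

/-- The uniform distribution on `[0,1]`. -/
def unif : Measure ℝ := volume.restrict (Set.Icc (0 : ℝ) 1)

/-- Covariance of two real random variables. -/
def cov {Ω : Type*} [MeasurableSpace Ω] (X Y : Ω → ℝ) (μ : Measure Ω) : ℝ :=
  ∫ ω, (X ω - ∫ a, X a ∂μ) * (Y ω - ∫ a, Y a ∂μ) ∂μ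

end KVariance

namespace KVariance

lemma monotone_orderStat {k : ℕ} (x : Fin k → ℝ) : Monotone (orderStat x) :=
  Tuple.monotone_sort x

lemma sum_orderStat_comp {k : ℕ} (x : Fin k → ℝ) (f : ℝ → ℝ) :
    ∑ i, f (orderStat x i) = ∑ i, f (x i) :=
  Equiv.sum_comp (Tuple.sort x) (fun i => f (x i))

/-- rearrangement: sorted matching minimizes -/
lemma sorted_min {k : ℕ} (x y : Fin k → ℝ) (τ : Equiv.Perm (Fin k)) :
    ∑ i, (orderStat x i - orderStat y i) ^ 2
      ≤ ∑ i, (orderStat x i - orderStat y (τ i)) ^ 2 := by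
  have h1 : ∑ i, (orderStat y (τ i)) ^ 2 = ∑ i, (orderStat y i) ^ 2 :=
    Equiv.sum_comp τ (fun i => (orderStat y i) ^ 2)
  have h2 : ∑ i, orderStat x i * orderStat y (τ i) ≤ ∑ i, orderStat x i * orderStat y i :=
    ((monotone_orderStat x).monovary (monotone_orderStat y)).sum_mul_comp_perm_le_sum_mul
  have e : ∀ c : Fin k → ℝ, ∑ i, (orderStat x i - c i) ^ 2
      = ∑ i, (orderStat x i) ^ 2 - 2 * ∑ i, orderStat x i * c i + ∑ i, (c i) ^ 2 := by
    intro c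
    rw [Finset.mul_sum, ← Finset.sum_sub_distrib, ← Finset.sum_add_distrib]
    congr 1; ext i; ring
  have e2 := e (fun i => orderStat y (τ i))
  rw [e (orderStat y), e2, h1] at *
  linarith

lemma iInf_perm_eq {k : ℕ} (x y : Fin k → ℝ) :
    (⨅ σ : Equiv.Perm (Fin k), ∑ i, (x i - y (σ i)) ^ 2)
      = ∑ i, (orderStat x i - orderStat y i) ^ 2 := by
  have key : ∀ σ : Equiv.Perm (Fin k), ∑ i, (x i - y (σ i)) ^ 2
      = ∑ i, (orderStat x i - orderStat y (((Tuple.sort y)⁻¹ * σ * Tuple.sort x) i)) ^ 2 := by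
    intro σ
    rw [← Equiv.sum_comp (Tuple.sort x) (fun i => (x i - y (σ i)) ^ 2)]
    congr 1; ext i
    simp [orderStat, Equiv.Perm.mul_apply]
  apply le_antisymm
  · refine ciInf_le (Set.Finite.bddBelow (Set.finite_range _))
      (Tuple.sort y * (Tuple.sort x)⁻¹) |>.trans_eq ?_
    rw [key]
    have h1 : ((Tuple.sort y)⁻¹ * (Tuple.sort y * (Tuple.sort x)⁻¹) * Tuple.sort x)
        = (1 : Equiv.Perm (Fin k)) := by group
    rw [h1]; simp
  · exact le_ciInf fun σ => (key σ) ▸ sorted_min x y _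

end KVariance

namespace KVariance

lemma orderStat_le_iff {k : ℕ} (x : Fin k → ℝ) (i : Fin k) (t : ℝ) :
    orderStat x i ≤ t ↔ (i : ℕ) + 1 ≤ (Finset.univ.filter fun j => x j ≤ t).card := by
  have hcard : (Finset.univ.filter fun j => x j ≤ t).card
      = (Finset.univ.filter fun j => orderStat x j ≤ t).card := by
    apply Finset.card_nbij' (fun j => (Tuple.sort x)⁻¹ j) (fun j => Tuple.sort x j) <;>
      simp only [Set.MapsTo, Set.LeftInvOn, Set.RightInvOn, Set.InvOn, Set.EqOn, Finset.coe_filter,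
        Finset.mem_filter, Set.mem_setOf_eq, Finset.mem_univ, true_and] <;> simp [orderStat]
  rw [hcard]
  constructor
  · intro h
    calc (i : ℕ) + 1 = (Finset.Iic i).card := (Fin.card_Iic i).symm
    _ ≤ _ := by
        apply Finset.card_le_card
        intro j hj
        simp only [Finset.mem_Iic] at hj
        simp only [Finset.mem_filter, Finset.mem_univ, true_and]
        exact le_trans (monotone_orderStat x hj) h
  · intro h
    by_contra hlt
    push_neg at hlt
    have hsub : (Finset.univ.filter fun j => orderStat x j ≤ t) ⊆ Finset.Iio i := by
      intro j hj
      simp only [Finset.mem_filter, Finset.mem_univ, true_and] at hj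
      simp only [Finset.mem_Iio]
      by_contra hij
      push_neg at hij
      exact absurd (le_trans (monotone_orderStat x hij) hj) (not_le.2 hlt)
    have := Finset.card_le_card hsub
    rw [Fin.card_Iio] at this
    omega

lemma measurable_orderStat {k : ℕ} (i : Fin k) :
    Measurable fun x : Fin k → ℝ => orderStat x i := by
  apply measurable_of_Iic
  intro t
  have : (fun x : Fin k → ℝ => orderStat x i) ⁻¹' Set.Iic t
      = ⋃ S ∈ {S : Finset (Fin k) | S.card = (i : ℕ) + 1}, ⋂ j ∈ S, {x : Fin k → ℝ | x j ≤ t} := by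
    ext x
    simp only [Set.mem_preimage, Set.mem_Iic, orderStat_le_iff, Set.mem_iUnion, Set.mem_setOf_eq,
      Set.mem_iInter]
    constructor
    · intro h
      obtain ⟨S, hS, hcard⟩ := Finset.exists_subset_card_eq h
      exact ⟨S, hcard, fun j hj => (Finset.mem_filter.1 (hS hj)).2⟩
    · rintro ⟨S, hcard, hS⟩
      calc (i : ℕ) + 1 = S.card := hcard.symm
      _ ≤ _ := Finset.card_le_card fun j hj => Finset.mem_filter.2 ⟨Finset.mem_univ j, hS j hj⟩
  rw [this]
  exact MeasurableSet.biUnion (Set.to_countable _) fun S _ =>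
    MeasurableSet.biInter (Set.to_countable _) fun j _ =>
      measurableSet_le (measurable_pi_apply j) measurable_const

end KVariance

namespace KVariance

variable {k : ℕ} {μ : Measure ℝ} [IsProbabilityMeasure μ]

lemma pi_map_eval (j : Fin k) :
    (Measure.pi fun _ : Fin k => μ).map (fun x => x j) = μ := by
  ext s hs
  rw [Measure.map_apply (measurable_pi_apply j) hs]
  have h : (fun x : Fin k → ℝ => x j) ⁻¹' s
      = Set.pi Set.univ (Function.update (fun _ => Set.univ) j s) := by
    rw [Set.eval_preimage]
  rw [h, Measure.pi_pi]
  rw [Finset.prod_eq_single j (fun i _ hij => by simp [Function.update_apply, hij])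
    (by simp)]
  simp

lemma integrable_eval_sq (h2 : Integrable (fun x => x ^ 2) μ) (j : Fin k) :
    Integrable (fun x : Fin k → ℝ => (x j) ^ 2) (Measure.pi fun _ : Fin k => μ) := by
  have key : Integrable (fun x : ℝ => x ^ 2)
      ((Measure.pi fun _ : Fin k => μ).map (fun x => x j)) := by
    rw [pi_map_eval]; exact h2
  exact (integrable_map_measure key.aestronglyMeasurable
    (measurable_pi_apply j).aemeasurable).1 key

lemma integrable_orderStat_sq (h2 : Integrable (fun x => x ^ 2) μ) (i : Fin k) :
    Integrable (fun x : Fin k → ℝ => (orderStat x i) ^ 2)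
      (Measure.pi fun _ : Fin k => μ) := by
  have hb : Integrable (fun x : Fin k → ℝ => ∑ j, (x j) ^ 2)
      (Measure.pi fun _ : Fin k => μ) :=
    integrable_finset_sum _ fun j _ => integrable_eval_sq h2 j
  refine hb.mono (((measurable_orderStat i).pow_const 2).aestronglyMeasurable) ?_
  filter_upwards with x
  rw [Real.norm_eq_abs, Real.norm_eq_abs, abs_of_nonneg (sq_nonneg _),
    abs_of_nonneg (Finset.sum_nonneg fun j _ => sq_nonneg _)]
  exact Finset.single_le_sum (f := fun j => (x j) ^ 2) (fun j _ => sq_nonneg _)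
    (Finset.mem_univ (Tuple.sort x i))

lemma memLp_orderStat (h2 : Integrable (fun x => x ^ 2) μ) (i : Fin k) :
    MemLp (fun x : Fin k → ℝ => orderStat x i) 2 (Measure.pi fun _ : Fin k => μ) :=
  (memLp_two_iff_integrable_sq
    (measurable_orderStat i).aestronglyMeasurable).2 (integrable_orderStat_sq h2 i)

lemma integrable_orderStat (h2 : Integrable (fun x => x ^ 2) μ) (i : Fin k) :
    Integrable (fun x : Fin k → ℝ => orderStat x i) (Measure.pi fun _ : Fin k => μ) :=
  (memLp_orderStat h2 i).integrable one_le_two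

end KVariance

namespace KVariance

variable {k : ℕ} {μ : Measure ℝ} [IsProbabilityMeasure μ]

lemma integral_eval_sq (j : Fin k) :
    ∫ x : Fin k → ℝ, (x j) ^ 2 ∂(Measure.pi fun _ : Fin k => μ) = ∫ x, x ^ 2 ∂μ := by
  have h := integral_map (μ := Measure.pi fun _ : Fin k => μ)
    (φ := fun x : Fin k → ℝ => x j) (f := fun x : ℝ => x ^ 2)
    (measurable_pi_apply j).aemeasurable
    (by rw [pi_map_eval]
        exact (measurable_id.pow_const 2).aestronglyMeasurable)
  rw [pi_map_eval] at h
  exact h.symm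

lemma integral_eval (j : Fin k) :
    ∫ x : Fin k → ℝ, x j ∂(Measure.pi fun _ : Fin k => μ) = ∫ x, x ∂μ := by
  have h := integral_map (μ := Measure.pi fun _ : Fin k => μ)
    (φ := fun x : Fin k → ℝ => x j) (f := fun x : ℝ => x)
    (measurable_pi_apply j).aemeasurable
    (by rw [pi_map_eval]; exact measurable_id.aestronglyMeasurable)
  rw [pi_map_eval] at h
  exact h.symm

lemma integrable_eval (h2 : Integrable (fun x => x ^ 2) μ) (j : Fin k) :
    Integrable (fun x : Fin k → ℝ => x j) (Measure.pi fun _ : Fin k => μ) := by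
  have key : Integrable (fun x : ℝ => x)
      ((Measure.pi fun _ : Fin k => μ).map (fun x => x j)) := by
    rw [pi_map_eval]
    exact ((memLp_two_iff_integrable_sq
      measurable_id.aestronglyMeasurable).2 h2).integrable one_le_two
  exact (integrable_map_measure key.aestronglyMeasurable
    (measurable_pi_apply j).aemeasurable).1 key

lemma sum_integral_orderStat_sq (h2 : Integrable (fun x => x ^ 2) μ) :
    ∑ i : Fin k, ∫ x, (orderStat x i) ^ 2 ∂(Measure.pi fun _ : Fin k => μ)
      = (k : ℝ) * ∫ x, x ^ 2 ∂μ := by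
  rw [← integral_finset_sum _ fun i _ => integrable_orderStat_sq h2 i]
  have h : ∀ x : Fin k → ℝ, ∑ i, (orderStat x i) ^ 2 = ∑ i, (x i) ^ 2 :=
    fun x => sum_orderStat_comp x (· ^ 2)
  simp_rw [h]
  rw [integral_finset_sum _ fun i _ => integrable_eval_sq h2 i]
  simp [integral_eval_sq, Finset.sum_const, mul_comm]

lemma sum_integral_orderStat (h2 : Integrable (fun x => x ^ 2) μ) :
    ∑ i : Fin k, ∫ x, orderStat x i ∂(Measure.pi fun _ : Fin k => μ)
      = (k : ℝ) * ∫ x, x ∂μ := by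
  rw [← integral_finset_sum _ fun i _ => integrable_orderStat h2 i]
  have h : ∀ x : Fin k → ℝ, ∑ i, orderStat x i = ∑ i, x i :=
    fun x => sum_orderStat_comp x (fun t => t)
  simp_rw [h]
  rw [integral_finset_sum _ fun i _ => integrable_eval h2 i]
  simp [integral_eval, Finset.sum_const, mul_comm]

end KVariance

namespace KVariance

variable {k : ℕ} {μ : Measure ℝ} [IsProbabilityMeasure μ]

lemma map_fst_pi :
    ((Measure.pi fun _ : Fin k => μ).prod (Measure.pi fun _ : Fin k => μ)).map Prod.fst
      = Measure.pi fun _ : Fin k => μ := by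
  rw [Measure.map_fst_prod]; simp

lemma map_snd_pi :
    ((Measure.pi fun _ : Fin k => μ).prod (Measure.pi fun _ : Fin k => μ)).map Prod.snd
      = Measure.pi fun _ : Fin k => μ := by
  rw [Measure.map_snd_prod]; simp

lemma integrable_fst_comp {f : (Fin k → ℝ) → ℝ} (hm : Measurable f)
    (hf : Integrable f (Measure.pi fun _ : Fin k => μ)) :
    Integrable (fun p : (Fin k → ℝ) × (Fin k → ℝ) => f p.1)
      ((Measure.pi fun _ : Fin k => μ).prod (Measure.pi fun _ : Fin k => μ)) := by
  refine (integrable_map_measure ?_ measurable_fst.aemeasurable).1 (by rwa [map_fst_pi])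
  rw [map_fst_pi]; exact hm.aestronglyMeasurable

lemma integrable_snd_comp {f : (Fin k → ℝ) → ℝ} (hm : Measurable f)
    (hf : Integrable f (Measure.pi fun _ : Fin k => μ)) :
    Integrable (fun p : (Fin k → ℝ) × (Fin k → ℝ) => f p.2)
      ((Measure.pi fun _ : Fin k => μ).prod (Measure.pi fun _ : Fin k => μ)) := by
  refine (integrable_map_measure ?_ measurable_snd.aemeasurable).1 (by rwa [map_snd_pi])
  rw [map_snd_pi]; exact hm.aestronglyMeasurable

lemma integral_fst_comp {f : (Fin k → ℝ) → ℝ} (hm : Measurable f) :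
    ∫ p, f p.1 ∂((Measure.pi fun _ : Fin k => μ).prod (Measure.pi fun _ : Fin k => μ))
      = ∫ x, f x ∂(Measure.pi fun _ : Fin k => μ) := by
  have h := integral_map (φ := (Prod.fst : (Fin k → ℝ) × (Fin k → ℝ) → Fin k → ℝ))
    (f := f) measurable_fst.aemeasurable
    (μ := (Measure.pi fun _ : Fin k => μ).prod (Measure.pi fun _ : Fin k => μ))
    (by rw [map_fst_pi]; exact hm.aestronglyMeasurable)
  rw [map_fst_pi] at h
  exact h.symm

lemma integral_snd_comp {f : (Fin k → ℝ) → ℝ} (hm : Measurable f) :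
    ∫ p, f p.2 ∂((Measure.pi fun _ : Fin k => μ).prod (Measure.pi fun _ : Fin k => μ))
      = ∫ x, f x ∂(Measure.pi fun _ : Fin k => μ) := by
  have h := integral_map (φ := (Prod.snd : (Fin k → ℝ) × (Fin k → ℝ) → Fin k → ℝ))
    (f := f) measurable_snd.aemeasurable
    (μ := (Measure.pi fun _ : Fin k => μ).prod (Measure.pi fun _ : Fin k => μ))
    (by rw [map_snd_pi]; exact hm.aestronglyMeasurable)
  rw [map_snd_pi] at h
  exact h.symm

lemma pair_integrable (h2 : Integrable (fun x => x ^ 2) μ) (i : Fin k) :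
    Integrable (fun p : (Fin k → ℝ) × (Fin k → ℝ) =>
        (orderStat p.1 i - orderStat p.2 i) ^ 2)
      ((Measure.pi fun _ : Fin k => μ).prod (Measure.pi fun _ : Fin k => μ)) := by
  have hrw : (fun p : (Fin k → ℝ) × (Fin k → ℝ) => (orderStat p.1 i - orderStat p.2 i) ^ 2)
      = fun p => ((orderStat p.1 i) ^ 2 + (orderStat p.2 i) ^ 2)
          - 2 * (orderStat p.1 i * orderStat p.2 i) := by
    funext p; ring
  rw [hrw]
  exact ((integrable_fst_comp ((measurable_orderStat i).pow_const 2)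
      (integrable_orderStat_sq h2 i)).add
    (integrable_snd_comp ((measurable_orderStat i).pow_const 2)
      (integrable_orderStat_sq h2 i))).sub
    (((integrable_orderStat h2 i).mul_prod (integrable_orderStat h2 i)).const_mul 2)

lemma pair_integral (h2 : Integrable (fun x => x ^ 2) μ) (i : Fin k) :
    ∫ p, (orderStat p.1 i - orderStat p.2 i) ^ 2
        ∂((Measure.pi fun _ : Fin k => μ).prod (Measure.pi fun _ : Fin k => μ))
      = 2 * (∫ x, (orderStat x i) ^ 2 ∂(Measure.pi fun _ : Fin k => μ))
        - 2 * (∫ x, orderStat x i ∂(Measure.pi fun _ : Fin k => μ)) ^ 2 := by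
  have hrw : (fun p : (Fin k → ℝ) × (Fin k → ℝ) => (orderStat p.1 i - orderStat p.2 i) ^ 2)
      = fun p => ((orderStat p.1 i) ^ 2 + (orderStat p.2 i) ^ 2)
          - 2 * (orderStat p.1 i * orderStat p.2 i) := by
    funext p; ring
  rw [hrw, integral_sub, integral_add, integral_const_mul,
    integral_prod_mul (fun x => orderStat x i) (fun x => orderStat x i),
    integral_fst_comp ((measurable_orderStat i).pow_const 2),
    integral_snd_comp ((measurable_orderStat i).pow_const 2)]
  · ring
  · exact integrable_fst_comp ((measurable_orderStat i).pow_const 2)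
      (integrable_orderStat_sq h2 i)
  · exact integrable_snd_comp ((measurable_orderStat i).pow_const 2)
      (integrable_orderStat_sq h2 i)
  · exact (integrable_fst_comp ((measurable_orderStat i).pow_const 2)
      (integrable_orderStat_sq h2 i)).add
      (integrable_snd_comp ((measurable_orderStat i).pow_const 2)
        (integrable_orderStat_sq h2 i))
  · exact ((integrable_orderStat h2 i).mul_prod (integrable_orderStat h2 i)).const_mul 2

end KVariance



open KVariance

/-- for `μ` on `ℝ` with finite variance `σ²`,
`Var_k(μ) = kσ² - ∑ᵢ (E[X₍ᵢ₎] - E[X])²`, and in particular `Var_k(μ) ≤ kσ²`. -/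
theorem statement9 (k : ℕ) (μ : MeasureTheory.Measure ℝ)
    [MeasureTheory.IsProbabilityMeasure μ]
    (h2 : MeasureTheory.Integrable (fun x => x ^ 2) μ) :
    kVar1 k μ = (k : ℝ) * variance id μ -
        ∑ i : Fin k,
          ((∫ x, orderStat x i ∂(MeasureTheory.Measure.pi fun _ : Fin k => μ))
              - ∫ x, x ∂μ) ^ 2 ∧
      kVar1 k μ ≤ (k : ℝ) * variance id μ := by
  set Pk : Measure (Fin k → ℝ) := Measure.pi fun _ : Fin k => μ with hPk
  set A : Fin k → ℝ := fun i => ∫ x, (orderStat x i) ^ 2 ∂Pk with hA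
  set B : Fin k → ℝ := fun i => ∫ x, orderStat x i ∂Pk with hB
  set m : ℝ := ∫ x, x ∂μ with hm
  have hvar : variance id μ = (∫ x, x ^ 2 ∂μ) - m ^ 2 := by
    rw [variance_eq_sub ((memLp_two_iff_integrable_sq
      measurable_id.aestronglyMeasurable).2 h2)]
    simp [Pi.pow_apply, hm]
  rcases Nat.eq_zero_or_pos k with hk | hk
  · subst hk
    constructor <;> simp [kVar1]
  -- main computation
  have hkne : (k : ℝ) ≠ 0 := Nat.cast_ne_zero.2 hk.ne'
  have hmc : ∀ p : (Fin k → ℝ) × (Fin k → ℝ), matchCost1 p.1 p.2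
      = (1 / (k : ℝ)) * ∑ i, (orderStat p.1 i - orderStat p.2 i) ^ 2 := by
    intro p; rw [matchCost1, iInf_perm_eq]
  have hint : ∫ p, matchCost1 p.1 p.2 ∂(Pk.prod Pk)
      = (1 / (k : ℝ)) * ∑ i, (2 * A i - 2 * B i ^ 2) := by
    calc ∫ p, matchCost1 p.1 p.2 ∂(Pk.prod Pk)
        = ∫ p, (1 / (k : ℝ)) * ∑ i, (orderStat p.1 i - orderStat p.2 i) ^ 2 ∂(Pk.prod Pk) := by
          simp_rw [hmc]
      _ = (1 / (k : ℝ)) * ∫ p, ∑ i, (orderStat p.1 i - orderStat p.2 i) ^ 2 ∂(Pk.prod Pk) :=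
          integral_const_mul _ _
      _ = (1 / (k : ℝ)) * ∑ i, ∫ p, (orderStat p.1 i - orderStat p.2 i) ^ 2 ∂(Pk.prod Pk) := by
          rw [integral_finset_sum _ fun i _ => pair_integrable h2 i]
      _ = (1 / (k : ℝ)) * ∑ i, (2 * A i - 2 * B i ^ 2) := by
          congr 1
          exact Finset.sum_congr rfl fun i _ => pair_integral h2 i
  have hkv : kVar1 k μ = ∑ i, (A i - B i ^ 2) := by
    rw [kVar1, ← hPk, hint]
    have : ∑ i, (2 * A i - 2 * B i ^ 2) = 2 * ∑ i, (A i - B i ^ 2) := by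
      rw [Finset.mul_sum]
      exact Finset.sum_congr rfl fun i _ => by ring
    rw [this]
    field_simp
  have hAs : ∑ i, A i = (k : ℝ) * ∫ x, x ^ 2 ∂μ := sum_integral_orderStat_sq h2
  have hBs : ∑ i, B i = (k : ℝ) * m := sum_integral_orderStat h2
  have hexp : ∑ i, (B i - m) ^ 2
      = ∑ i, B i ^ 2 - 2 * m * ∑ i, B i + (k : ℝ) * m ^ 2 := by
    have e1 : ∑ i, (B i - m) ^ 2 = ∑ i : Fin k, (B i ^ 2 - 2 * m * B i + m ^ 2) :=
      Finset.sum_congr rfl fun i _ => by ring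
    rw [e1, Finset.sum_add_distrib, Finset.sum_sub_distrib, ← Finset.mul_sum]
    simp [Finset.sum_const, nsmul_eq_mul]
  have hsub : ∑ i, (A i - B i ^ 2) = ∑ i, A i - ∑ i, B i ^ 2 :=
    Finset.sum_sub_distrib _ _
  have heq : kVar1 k μ = (k : ℝ) * variance id μ - ∑ i, (B i - m) ^ 2 := by
    rw [hkv, hvar, hexp, hsub, hAs, hBs]
    ring
  refine ⟨heq, ?_⟩
  rw [heq]
  have : (0 : ℝ) ≤ ∑ i, (B i - m) ^ 2 := Finset.sum_nonneg fun i _ => sq_nonneg _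
  linarith
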